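/- Let a > 0 and C > 0. Define U on the whole plane ℝ² by U(x,y) = C(r² − a²) for 0 ≤ r ≤ a and U(x,y) = 2Ca²·ln(r/a) for r ≥ a, where r² = x² + y². Then U is continuously differentiable on ℝ², U < 0 in the open disk r < a where it satisfies the wave equation ∂²U/∂x² − ∂²U/∂y² = 0, U = 0 on the circle r = a, and U > 0 for r > a where it satisfies the Laplace equation ∂²U/∂x² + ∂²U/∂y² = 0. Hence U is a solution of equation (1) on the whole plane that changes the type of the equation. -/

import Mathlib

open Real Topology

/-!
Write `U = φ(r²)`, where `φ t = C (t - a²)` for `t ≤ a²` and `φ t = C a² log (t / a²)` beyond.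
Both branches vanish at `t = a²` with slope `C` there, so `φ`, and hence `U`, is `C¹`.
For a radial function `f(x² + y²)` one has `∂²/∂x² = 2f' + 4x²f''` and `∂²/∂y² = 2f' + 4y²f''`.
On the linear branch `f'' = 0`, so the two second derivatives agree (wave equation); on the
logarithmic branch `t f'' + f' = 0`, so they sum to `4 (f' + r² f'') = 0` (Laplace equation).
-/

/-- Second partial derivative of `U` in the first (x) variable. -/
noncomputable def pxx (U : ℝ × ℝ → ℝ) (p : ℝ × ℝ) : ℝ :=
  deriv (deriv (fun x => U (x, p.2))) p.1

/-- Second partial derivative of `U` in the second (y) variable. -/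
noncomputable def pyy (U : ℝ × ℝ → ℝ) (p : ℝ × ℝ) : ℝ :=
  deriv (deriv (fun y => U (p.1, y))) p.2

theorem HasDerivAt.ite_le {f g : ℝ → ℝ} {c d : ℝ} (hfg : f c = g c)
    (hf : HasDerivAt f d c) (hg : HasDerivAt g d c) :
    HasDerivAt (fun t => if t ≤ c then f t else g t) d c := by
  have hle : HasDerivWithinAt (fun t => if t ≤ c then f t else g t) d (Set.Iic c) c :=
    hf.hasDerivWithinAt.congr (fun t ht => if_pos ht) (if_pos le_rfl)
  have hge : HasDerivWithinAt (fun t => if t ≤ c then f t else g t) d (Set.Ici c) c := by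
    refine hg.hasDerivWithinAt.congr (fun t ht => ?_) (by simp [hfg])
    rcases (Set.mem_Ici.1 ht).eq_or_lt with rfl | hlt
    · simp [hfg]
    · simp [not_le.2 hlt]
  simpa [Set.Iic_union_Ici] using hle.union hge

section SliceDerivatives

variable {f f' : ℝ → ℝ} {f'' : ℝ}

theorem deriv_deriv_comp_sq_add (hf : ∀ t, HasDerivAt f (f' t) t) (b x : ℝ)
    (hf' : HasDerivAt f' f'' (x ^ 2 + b)) :
    deriv (deriv fun x => f (x ^ 2 + b)) x = 2 * f' (x ^ 2 + b) + 4 * x ^ 2 * f'' := by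
  have hsq : ∀ y : ℝ, HasDerivAt (fun x => x ^ 2 + b) (2 * y) y := fun y => by
    simpa using (hasDerivAt_pow 2 y).add_const b
  have hderiv : deriv (fun x => f (x ^ 2 + b)) = fun x => f' (x ^ 2 + b) * (2 * x) :=
    funext fun y => ((hf _).comp y (hsq y)).deriv
  have hsecond : HasDerivAt (fun x => f' (x ^ 2 + b) * (2 * x))
      (f'' * (2 * x) * (2 * x) + f' (x ^ 2 + b) * 2) x := by
    have hinner : HasDerivAt (fun x => f' (x ^ 2 + b)) (f'' * (2 * x)) x := hf'.comp x (hsq x)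
    simpa using hinner.fun_mul ((hasDerivAt_id' x).const_mul 2)
  rw [hderiv, hsecond.deriv]
  ring

theorem pxx_comp_sq_add_sq (hf : ∀ t, HasDerivAt f (f' t) t) (p : ℝ × ℝ)
    (hf' : HasDerivAt f' f'' (p.1 ^ 2 + p.2 ^ 2)) :
    pxx (fun q => f (q.1 ^ 2 + q.2 ^ 2)) p
      = 2 * f' (p.1 ^ 2 + p.2 ^ 2) + 4 * p.1 ^ 2 * f'' :=
  deriv_deriv_comp_sq_add hf _ _ hf'

theorem pyy_comp_sq_add_sq (hf : ∀ t, HasDerivAt f (f' t) t) (p : ℝ × ℝ)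
    (hf' : HasDerivAt f' f'' (p.1 ^ 2 + p.2 ^ 2)) :
    pyy (fun q => f (q.1 ^ 2 + q.2 ^ 2)) p
      = 2 * f' (p.1 ^ 2 + p.2 ^ 2) + 4 * p.2 ^ 2 * f'' := by
  rw [add_comm (p.1 ^ 2)] at hf' ⊢
  simp_rw [pyy, add_comm (p.1 ^ 2)]
  exact deriv_deriv_comp_sq_add hf _ _ hf'

end SliceDerivatives

theorem two_mul_log_sqrt_div {s : ℝ} (hs : 0 ≤ s) (a : ℝ) :
    2 * log (√s / a) = log (s / a ^ 2) := by
  have h := Real.log_pow (√s / a) 2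
  rw [div_pow, sq_sqrt hs] at h
  exact_mod_cast h.symm

/-- The profile of `U` as a function of `t = r²`, with `c = a²`. -/
noncomputable def quadLogProfile (c C t : ℝ) : ℝ :=
  if t ≤ c then C * (t - c) else C * c * log (t / c)

section QuadLogProfile

variable {c : ℝ} (C : ℝ)

theorem hasDerivAt_quadLogProfile (hc : 0 < c) (t : ℝ) :
    HasDerivAt (quadLogProfile c C) (C * c / max t c) t := by
  have hlin : ∀ u, HasDerivAt (fun s => C * (s - c)) C u := fun u => by
    simpa using ((hasDerivAt_id u).sub_const c).const_mul C
  have hlog : ∀ u, 0 < u → HasDerivAt (fun s => C * c * log (s / c)) (C * c / u) u :=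
    fun u hu => by
      have := (((hasDerivAt_id u).div_const c).log (div_pos hu hc).ne').const_mul (C * c)
      exact this.congr_deriv (by simp only [id]; field_simp)
  rcases lt_trichotomy t c with hlt | rfl | hgt
  · have hev : quadLogProfile c C =ᶠ[𝓝 t] fun s => C * (s - c) := by
      filter_upwards [Iio_mem_nhds hlt] with s hs
      exact if_pos hs.le
    rw [max_eq_right hlt.le, mul_div_cancel_right₀ C hc.ne']
    exact (hlin t).congr_of_eventuallyEq hev
  · rw [max_self]
    refine HasDerivAt.ite_le (by simp [hc.ne']) ?_ (hlog t hc)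
    rw [mul_div_cancel_right₀ C hc.ne']
    exact hlin t
  · have hev : quadLogProfile c C =ᶠ[𝓝 t] fun s => C * c * log (s / c) := by
      filter_upwards [Ioi_mem_nhds hgt] with s hs
      exact if_neg (not_le.2 hs)
    rw [max_eq_left hgt.le]
    exact (hlog t (hc.trans hgt)).congr_of_eventuallyEq hev

theorem contDiff_quadLogProfile (hc : 0 < c) : ContDiff ℝ 1 (quadLogProfile c C) := by
  rw [contDiff_one_iff_deriv]
  refine ⟨fun t => (hasDerivAt_quadLogProfile C hc t).differentiableAt, ?_⟩
  rw [funext fun t => (hasDerivAt_quadLogProfile C hc t).deriv]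
  exact continuous_const.div (continuous_id.max continuous_const)
    fun t => (hc.trans_le (le_max_right t c)).ne'

theorem hasDerivAt_quadLogProfile_deriv_of_lt {t : ℝ} (ht : t < c) :
    HasDerivAt (fun s => C * c / max s c) 0 t := by
  refine (hasDerivAt_const t (C * c / c)).congr_of_eventuallyEq ?_
  filter_upwards [Iio_mem_nhds ht] with s hs
  rw [max_eq_right hs.le]

theorem hasDerivAt_quadLogProfile_deriv_of_gt (hc : 0 < c) {t : ℝ} (ht : c < t) :
    HasDerivAt (fun s => C * c / max s c) (-(C * c) / t ^ 2) t := by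
  have hdiv : HasDerivAt (fun s => C * c / s) (-(C * c) / t ^ 2) t := by
    simpa [div_eq_mul_inv, neg_div] using
      (hasDerivAt_inv (hc.trans ht).ne').const_mul (C * c)
  refine hdiv.congr_of_eventuallyEq ?_
  filter_upwards [Ioi_mem_nhds ht] with s hs
  rw [max_eq_left hs.le]

theorem quadLogProfile_self : quadLogProfile c C c = 0 := by
  simp [quadLogProfile]

variable {C}

theorem quadLogProfile_neg (hC : 0 < C) {t : ℝ} (ht : t < c) : quadLogProfile c C t < 0 := by
  rw [quadLogProfile, if_pos ht.le]
  exact mul_neg_of_pos_of_neg hC (sub_neg.2 ht)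

theorem quadLogProfile_pos (hc : 0 < c) (hC : 0 < C) {t : ℝ} (ht : c < t) :
    0 < quadLogProfile c C t := by
  rw [quadLogProfile, if_neg (not_le.2 ht)]
  exact mul_pos (mul_pos hC hc) (log_pos ((one_lt_div hc).2 ht))

end QuadLogProfile

/-- For `a > 0` and `C > 0`, the function `U = C(r² - a²)` for `r ≤ a`,
`U = 2Ca² ln(r/a)` for `r ≥ a` is a type-changing solution of equation (1) on
the whole plane: it is continuously differentiable on `ℝ²`, negative and a
wave-equation solution in `r < a`, zero on the circle `r = a`, and positive
and harmonic for `r > a`. -/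
theorem whole_plane_eq1_type_changing
    (a C : ℝ) (ha : 0 < a) (hC : 0 < C)
    (U : ℝ × ℝ → ℝ)
    (hU : ∀ p : ℝ × ℝ, U p =
      if p.1 ^ 2 + p.2 ^ 2 ≤ a ^ 2 then
        C * (p.1 ^ 2 + p.2 ^ 2 - a ^ 2)
      else
        2 * C * a ^ 2 * Real.log (Real.sqrt (p.1 ^ 2 + p.2 ^ 2) / a)) :
    ContDiff ℝ 1 U ∧
    (∀ p : ℝ × ℝ, p.1 ^ 2 + p.2 ^ 2 < a ^ 2 →
      U p < 0 ∧ pxx U p - pyy U p = 0) ∧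
    (∀ p : ℝ × ℝ, p.1 ^ 2 + p.2 ^ 2 = a ^ 2 → U p = 0) ∧
    (∀ p : ℝ × ℝ, a ^ 2 < p.1 ^ 2 + p.2 ^ 2 →
      0 < U p ∧ pxx U p + pyy U p = 0) := by
  have ha2 : 0 < a ^ 2 := by positivity
  obtain rfl : U = fun p => quadLogProfile (a ^ 2) C (p.1 ^ 2 + p.2 ^ 2) := by
    funext p
    rw [hU, quadLogProfile, ← two_mul_log_sqrt_div (by positivity)]
    split_ifs <;> ring
  have hderiv := hasDerivAt_quadLogProfile C ha2
  refine ⟨(contDiff_quadLogProfile C ha2).comp (by fun_prop), fun p hp => ⟨?_, ?_⟩,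
    fun p hp => by simp only [hp, quadLogProfile_self], fun p hp => ⟨?_, ?_⟩⟩
  · exact quadLogProfile_neg hC hp
  · have hflat := hasDerivAt_quadLogProfile_deriv_of_lt C hp
    rw [pxx_comp_sq_add_sq hderiv p hflat, pyy_comp_sq_add_sq hderiv p hflat]
    ring
  · exact quadLogProfile_pos ha2 hC hp
  · have hcurved := hasDerivAt_quadLogProfile_deriv_of_gt C ha2 hp
    rw [pxx_comp_sq_add_sq hderiv p hcurved, pyy_comp_sq_add_sq hderiv p hcurved,
      max_eq_left hp.le]
    field_simp
    ring
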